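/- Uniqueness from strict dual feasibility: consider the convex program min over B ∈ ℝ^{p×r} of f(B) = (1/2n) Σ_{i=1}^r ‖y^i − X^i β^i‖₂² + λ ‖B‖_{1,∞} with λ > 0. Suppose B̂ with B̂_{U^c} = 0 is optimal, and there exists a dual matrix Z̃ in the subdifferential of ‖·‖_{1,∞} at B̂ satisfying the stationarity conditions and strictly Σ_{i=1}^r |Z̃_{j,i}| < 1 for every row j ∈ U^c. If additionally each matrix (X^i_U)ᵀ X^i_U is invertible, then every optimal solution B of the program satisfies B_{U^c} = 0, and the optimal solution is unique. -/

import Mathlib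

/-!
With `r̂^i = y^i - X^i β̂^i`, stationarity reads `(1/n) (X^i)ᵀ r̂^i = λ Z̃^i`, and a subgradient of
the positively homogeneous norm `‖·‖_{1,∞}` at `B̂` satisfies `⟨Z̃, B̂⟩ = ‖B̂‖_{1,∞}` and
`⟨Z̃, B⟩ ≤ ‖B‖_{1,∞}` for all `B`. Expanding the square then gives the exact identity
`f(B) - f(B̂) = (1/2n) ∑_i ‖X^i (β^i - β̂^i)‖² + λ (‖B‖_{1,∞} - ⟨Z̃, B⟩)`,
with both terms nonnegative.
For an optimal `B` both vanish. The second forces `⟨Z̃_j, B_j⟩ = ‖B_j‖_∞` in every row, which by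
Hölder and `∑_i |Z̃_{j,i}| < 1` leaves only `B_j = 0` for `j ∉ U`. The first says that
`β^i - β̂^i`, now supported on `U`, lies in the kernel of `X^i`, hence vanishes.
-/

open Finset

section SupNorm

variable {τ : Type*}

lemma abs_le_iSup_abs [Finite τ] (v : τ → ℝ) (i : τ) : |v i| ≤ ⨆ i', |v i'| :=
  le_ciSup (f := fun i' => |v i'|) (Set.finite_range _).bddAbove i

variable [Fintype τ]

lemma sum_mul_le_sum_abs_mul_iSup_abs (z v : τ → ℝ) :
    ∑ i, z i * v i ≤ (∑ i, |z i|) * ⨆ i, |v i| := by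
  rw [sum_mul]
  refine sum_le_sum fun i _ => ?_
  calc z i * v i ≤ |z i| * |v i| := by rw [← abs_mul]; exact le_abs_self _
    _ ≤ |z i| * ⨆ i', |v i'| := by gcongr; exact abs_le_iSup_abs v i

lemma eq_zero_of_iSup_abs_le_sum_mul {z v : τ → ℝ} (hz : ∑ i, |z i| < 1)
    (hv : ⨆ i, |v i| ≤ ∑ i, z i * v i) : v = 0 := by
  have hM : ⨆ i, |v i| = 0 := by
    have := sum_mul_le_sum_abs_mul_iSup_abs z v
    have := Real.iSup_nonneg fun i => abs_nonneg (v i)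
    nlinarith
  funext i
  exact abs_nonpos_iff.mp (hM ▸ abs_le_iSup_abs v i)

end SupNorm

section Subgradient

variable {E : Type*} [AddCommGroup E] [Module ℝ E] {N : E → ℝ}

lemma map_self_eq_of_subgradient (hN : ∀ c : ℝ, 0 ≤ c → ∀ x, N (c • x) = c * N x)
    (φ : E →ₗ[ℝ] ℝ) {x : E} (hφ : ∀ y, N x + φ (y - x) ≤ N y) : φ x = N x := by
  have h0 := hφ ((0 : ℝ) • x)
  have h2 := hφ ((2 : ℝ) • x)
  rw [hN 0 le_rfl, map_sub, map_smul] at h0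
  rw [hN 2 zero_le_two, map_sub, map_smul] at h2
  simp only [smul_eq_mul] at h0 h2
  linarith

lemma map_le_of_subgradient (hN : ∀ c : ℝ, 0 ≤ c → ∀ x, N (c • x) = c * N x)
    (φ : E →ₗ[ℝ] ℝ) {x : E} (hφ : ∀ y, N x + φ (y - x) ≤ N y) (y : E) : φ y ≤ N y := by
  have := hφ y
  rw [map_sub, map_self_eq_of_subgradient hN φ hφ] at this
  linarith

end Subgradient

namespace Matrix

variable {ι τ : Type*} [Fintype ι]

noncomputable def l1InfNorm (B : Matrix ι τ ℝ) : ℝ := ∑ j, ⨆ i, |B j i|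

lemma l1InfNorm_smul {c : ℝ} (hc : 0 ≤ c) (B : Matrix ι τ ℝ) :
    l1InfNorm (c • B) = c * l1InfNorm B := by
  simp only [l1InfNorm, mul_sum, Real.mul_iSup_of_nonneg hc, smul_apply, smul_eq_mul, abs_mul,
    abs_of_nonneg hc]

lemma l1InfNorm_updateRow_zero [DecidableEq ι] (j : ι) (v : τ → ℝ) :
    l1InfNorm (updateRow 0 j v) = ⨆ i, |v i| := by
  rw [l1InfNorm, sum_eq_single_of_mem j (mem_univ j)]
  · simp
  · intro j' _ hj'
    simp [hj']

variable [Fintype τ]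

def frobeniusPairing (Z : Matrix ι τ ℝ) : Matrix ι τ ℝ →ₗ[ℝ] ℝ where
  toFun B := ∑ j, ∑ i, Z j i * B j i
  map_add' B C := by simp only [add_apply, mul_add, sum_add_distrib]
  map_smul' c B := by
    simp only [smul_apply, smul_eq_mul, mul_sum, RingHom.id_apply, mul_left_comm c]

lemma frobeniusPairing_apply (Z B : Matrix ι τ ℝ) :
    frobeniusPairing Z B = ∑ j, ∑ i, Z j i * B j i := rfl

variable [DecidableEq ι]

lemma frobeniusPairing_updateRow_zero (Z : Matrix ι τ ℝ) (j : ι) (v : τ → ℝ) :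
    frobeniusPairing Z (updateRow 0 j v) = ∑ i, Z j i * v i := by
  rw [frobeniusPairing_apply, sum_eq_single_of_mem j (mem_univ j)]
  · simp
  · intro j' _ hj'
    simp [hj']

lemma row_pairing_le_iSup_abs {Z : Matrix ι τ ℝ}
    (hZ : ∀ B, frobeniusPairing Z B ≤ l1InfNorm B) (j : ι) (v : τ → ℝ) :
    ∑ i, Z j i * v i ≤ ⨆ i, |v i| := by
  simpa only [frobeniusPairing_updateRow_zero, l1InfNorm_updateRow_zero]
    using hZ (updateRow 0 j v)

lemma row_pairing_eq_of_pairing_eq {Z B : Matrix ι τ ℝ}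
    (hZ : ∀ B, frobeniusPairing Z B ≤ l1InfNorm B) (hB : frobeniusPairing Z B = l1InfNorm B)
    (j : ι) : ∑ i, Z j i * B j i = ⨆ i, |B j i| :=
  (sum_eq_sum_iff_of_le fun j _ => row_pairing_le_iSup_abs hZ j (B j)).mp hB j (mem_univ j)

end Matrix

open Matrix

section LeastSquares

variable {ι τ κ : Type*} [Fintype ι] [Fintype τ] [Fintype κ]

def residualSumSq (y : τ → κ → ℝ) (X : τ → Matrix κ ι ℝ) (B : Matrix ι τ ℝ) : ℝ :=
  ∑ i, ∑ k, (y i k - ∑ j, X i k j * B j i) ^ 2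

noncomputable def l1InfObjective (n lam : ℝ) (y : τ → κ → ℝ) (X : τ → Matrix κ ι ℝ)
    (B : Matrix ι τ ℝ) : ℝ :=
  1 / (2 * n) * residualSumSq y X B + lam * l1InfNorm B

lemma residualSumSq_sub_residualSumSq (y : τ → κ → ℝ) (X : τ → Matrix κ ι ℝ)
    (B Bhat : Matrix ι τ ℝ) :
    residualSumSq y X B - residualSumSq y X Bhat =
      ∑ i, ∑ k, (∑ j, X i k j * (B - Bhat) j i) ^ 2
        - 2 * ∑ j, ∑ i, (B - Bhat) j i * ∑ k, X i k j * (y i k - ∑ j', X i k j' * Bhat j' i) := by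
  have hfit : ∀ i k, ∑ j, X i k j * (B - Bhat) j i
      = ∑ j, X i k j * B j i - ∑ j, X i k j * Bhat j i := by
    simp only [Matrix.sub_apply, mul_sub, sum_sub_distrib, implies_true]
  have hcross : ∑ j, ∑ i, (B - Bhat) j i * ∑ k, X i k j * (y i k - ∑ j', X i k j' * Bhat j' i)
      = ∑ i, ∑ k, (∑ j, X i k j * (B - Bhat) j i) * (y i k - ∑ j', X i k j' * Bhat j' i) := by
    rw [sum_comm]
    refine sum_congr rfl fun i _ => ?_
    simp only [mul_sum, sum_mul]
    rw [sum_comm]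
    exact sum_congr rfl fun k _ => sum_congr rfl fun j _ => by ring
  rw [hcross, residualSumSq, residualSumSq, mul_sum, ← sum_sub_distrib, ← sum_sub_distrib]
  refine sum_congr rfl fun i _ => ?_
  rw [mul_sum, ← sum_sub_distrib, ← sum_sub_distrib]
  refine sum_congr rfl fun k _ => ?_
  rw [hfit]
  ring

def L1InfStationary (n lam : ℝ) (y : τ → κ → ℝ) (X : τ → Matrix κ ι ℝ) (Bhat Z : Matrix ι τ ℝ) :
    Prop :=
  ∀ i j, (1 / n) * (∑ k, X i k j * (∑ j', X i k j' * Bhat j' i))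
    - (1 / n) * (∑ k, X i k j * y i k) + lam * Z j i = 0

variable {n lam : ℝ} {y : τ → κ → ℝ} {X : τ → Matrix κ ι ℝ} {Z Bhat : Matrix ι τ ℝ}

lemma l1InfObjective_sub_l1InfObjective
    (hstat : L1InfStationary n lam y X Bhat Z)
    (hself : frobeniusPairing Z Bhat = l1InfNorm Bhat) (B : Matrix ι τ ℝ) :
    l1InfObjective n lam y X B - l1InfObjective n lam y X Bhat =
      1 / (2 * n) * ∑ i, ∑ k, (∑ j, X i k j * (B - Bhat) j i) ^ 2
        + lam * (l1InfNorm B - frobeniusPairing Z B) := by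
  have hgrad : ∀ i j,
      1 / n * ∑ k, X i k j * (y i k - ∑ j', X i k j' * Bhat j' i) = lam * Z j i := by
    intro i j
    simp only [mul_sub, sum_sub_distrib]
    linarith [hstat i j]
  have hcross : 1 / (2 * n) * (2 * ∑ j, ∑ i, (B - Bhat) j i
      * ∑ k, X i k j * (y i k - ∑ j', X i k j' * Bhat j' i))
      = lam * (frobeniusPairing Z B - frobeniusPairing Z Bhat) := by
    rw [← map_sub, frobeniusPairing_apply, ← mul_assoc, show 1 / (2 * n) * 2 = 1 / n by ring,
      mul_sum, mul_sum]
    refine sum_congr rfl fun j _ => ?_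
    rw [mul_sum, mul_sum]
    refine sum_congr rfl fun i _ => ?_
    rw [mul_left_comm, hgrad]
    simp only [Matrix.sub_apply]
    ring
  have := residualSumSq_sub_residualSumSq y X B Bhat
  simp only [l1InfObjective]
  linear_combination (1 / (2 * n)) * this - hcross + lam * hself

lemma fit_eq_and_pairing_eq_of_l1InfObjective_le (hn : 0 < n) (hlam : 0 < lam)
    (hstat : L1InfStationary n lam y X Bhat Z)
    (hself : frobeniusPairing Z Bhat = l1InfNorm Bhat)
    (hdual : ∀ B, frobeniusPairing Z B ≤ l1InfNorm B) {B : Matrix ι τ ℝ}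
    (hB : l1InfObjective n lam y X B ≤ l1InfObjective n lam y X Bhat) :
    (∀ i k, ∑ j, X i k j * (B - Bhat) j i = 0) ∧ frobeniusPairing Z B = l1InfNorm B := by
  have hid := l1InfObjective_sub_l1InfObjective hstat hself B
  have hsq : 0 ≤ ∑ i, ∑ k, (∑ j, X i k j * (B - Bhat) j i) ^ 2 := by positivity
  have hgap : 0 ≤ l1InfNorm B - frobeniusPairing Z B := sub_nonneg.mpr (hdual B)
  have hc : 0 < 1 / (2 * n) := by positivity
  have hsq0 : ∑ i, ∑ k, (∑ j, X i k j * (B - Bhat) j i) ^ 2 = 0 := by nlinarith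
  have hgap0 : l1InfNorm B - frobeniusPairing Z B = 0 := by nlinarith
  refine ⟨fun i k => ?_, (sub_eq_zero.mp hgap0).symm⟩
  rw [sum_eq_zero_iff_of_nonneg fun i _ => by positivity] at hsq0
  have hi := hsq0 i (mem_univ i)
  rw [sum_eq_zero_iff_of_nonneg fun k _ => by positivity] at hi
  exact pow_eq_zero_iff two_ne_zero |>.mp (hi k (mem_univ k))

end LeastSquares

theorem stmt_16_general (n p r : ℕ) (hn : 0 < n) (lam : ℝ) (hlam : 0 < lam)
    (y : Fin r → Fin n → ℝ) (X : Fin r → Matrix (Fin n) (Fin p) ℝ)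
    (U : Finset (Fin p))
    (Bhat : Matrix (Fin p) (Fin r) ℝ)
    (hsupp : ∀ j ∉ U, ∀ i, Bhat j i = 0)
    (Zt : Matrix (Fin p) (Fin r) ℝ)
    (hZsub : ∀ B' : Matrix (Fin p) (Fin r) ℝ,
        (∑ j, ⨆ i, |Bhat j i|) + ∑ j, ∑ i, Zt j i * (B' j i - Bhat j i)
          ≤ ∑ j, ⨆ i, |B' j i|)
    (hstat : ∀ i j,
        (1 / (n : ℝ)) * (∑ k, X i k j * (∑ j', X i k j' * Bhat j' i))
          - (1 / (n : ℝ)) * (∑ k, X i k j * y i k) + lam * Zt j i = 0)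
    (hstrict : ∀ j ∉ U, ∑ i, |Zt j i| < 1)
    (hinv : ∀ i, ∀ c : Fin p → ℝ, (∀ j ∉ U, c j = 0) →
        (∀ k, ∑ j, X i k j * c j = 0) → ∀ j, c j = 0) :
    ∀ B : Matrix (Fin p) (Fin r) ℝ,
      (∀ B' : Matrix (Fin p) (Fin r) ℝ,
        (1 / (2 * (n : ℝ))) * (∑ i, ∑ k, (y i k - ∑ j, X i k j * B j i) ^ 2)
            + lam * ∑ j, ⨆ i, |B j i|
          ≤ (1 / (2 * (n : ℝ))) * (∑ i, ∑ k, (y i k - ∑ j, X i k j * B' j i) ^ 2)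
            + lam * ∑ j, ⨆ i, |B' j i|) →
      (∀ j ∉ U, ∀ i, B j i = 0) ∧ B = Bhat := by
  intro B hB
  have hN : ∀ c : ℝ, 0 ≤ c → ∀ B : Matrix (Fin p) (Fin r) ℝ,
      l1InfNorm (c • B) = c * l1InfNorm B := fun c hc => l1InfNorm_smul hc
  have hself := map_self_eq_of_subgradient hN (frobeniusPairing Zt) hZsub
  have hdual := map_le_of_subgradient hN (frobeniusPairing Zt) hZsub
  obtain ⟨hfit, hpair⟩ :=
    fit_eq_and_pairing_eq_of_l1InfObjective_le (Nat.cast_pos.mpr hn) hlam hstat hself hdual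
      (hB Bhat)
  have hBU : ∀ j ∉ U, ∀ i, B j i = 0 := fun j hj =>
    congrFun (eq_zero_of_iSup_abs_le_sum_mul (hstrict j hj)
      (row_pairing_eq_of_pairing_eq hdual hpair j).ge)
  refine ⟨hBU, ?_⟩
  ext j i
  refine sub_eq_zero.mp (hinv i (fun j => (B - Bhat) j i) (fun j hj => ?_) (hfit i) j)
  simp [hBU j hj, hsupp j hj]

/-- Uniqueness from strict dual feasibility: consider
`f(B) = (1/2n)∑_i ‖y^i − X^i β^i‖₂² + λ‖B‖_{1,∞}` with `λ > 0`. Suppose `B̂` vanishing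
off `U` is optimal and there is `Z̃` in the subdifferential of `‖·‖_{1,∞}` at `B̂`
satisfying the stationarity conditions and the strict dual feasibility
`∑_i |Z̃_{j,i}| < 1` for every `j ∉ U`. If each `X^i_U` has linearly independent
columns (i.e. `(X^i_U)ᵀX^i_U` is invertible), then every optimal solution vanishes off
`U` and the optimal solution is unique, i.e. equals `B̂`. -/
theorem stmt_16 (n p r : ℕ) (hn : 0 < n) (hr : 0 < r) (lam : ℝ) (hlam : 0 < lam)
    (y : Fin r → Fin n → ℝ) (X : Fin r → Matrix (Fin n) (Fin p) ℝ)
    (U : Finset (Fin p))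
    (Bhat : Matrix (Fin p) (Fin r) ℝ)
    (hsupp : ∀ j ∉ U, ∀ i, Bhat j i = 0)
    (hopt : ∀ B : Matrix (Fin p) (Fin r) ℝ,
        (1 / (2 * (n : ℝ))) * (∑ i, ∑ k, (y i k - ∑ j, X i k j * Bhat j i) ^ 2)
            + lam * ∑ j, ⨆ i, |Bhat j i|
          ≤ (1 / (2 * (n : ℝ))) * (∑ i, ∑ k, (y i k - ∑ j, X i k j * B j i) ^ 2)
            + lam * ∑ j, ⨆ i, |B j i|)
    (Zt : Matrix (Fin p) (Fin r) ℝ)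
    (hZsub : ∀ B' : Matrix (Fin p) (Fin r) ℝ,
        (∑ j, ⨆ i, |Bhat j i|) + ∑ j, ∑ i, Zt j i * (B' j i - Bhat j i)
          ≤ ∑ j, ⨆ i, |B' j i|)
    (hstat : ∀ i j,
        (1 / (n : ℝ)) * (∑ k, X i k j * (∑ j', X i k j' * Bhat j' i))
          - (1 / (n : ℝ)) * (∑ k, X i k j * y i k) + lam * Zt j i = 0)
    (hstrict : ∀ j ∉ U, ∑ i, |Zt j i| < 1)
    (hinv : ∀ i, ∀ c : Fin p → ℝ, (∀ j ∉ U, c j = 0) →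
        (∀ k, ∑ j, X i k j * c j = 0) → ∀ j, c j = 0) :
    ∀ B : Matrix (Fin p) (Fin r) ℝ,
      (∀ B' : Matrix (Fin p) (Fin r) ℝ,
        (1 / (2 * (n : ℝ))) * (∑ i, ∑ k, (y i k - ∑ j, X i k j * B j i) ^ 2)
            + lam * ∑ j, ⨆ i, |B j i|
          ≤ (1 / (2 * (n : ℝ))) * (∑ i, ∑ k, (y i k - ∑ j, X i k j * B' j i) ^ 2)
            + lam * ∑ j, ⨆ i, |B' j i|) →
      (∀ j ∉ U, ∀ i, B j i = 0) ∧ B = Bhat :=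
  stmt_16_general n p r hn lam hlam y X U Bhat hsupp Zt hZsub hstat hstrict hinv
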